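/- arXiv:0902.2919 — 2 statements merged into one kernel-verified Lean document; each statement's English description precedes it below -/
import Mathlib

section
/- With M and x = (9,13,13,13,13,13) as above, x cannot be written as a non-negative integral linear combination of any six of the ten rows of M. In particular, the cone C does not satisfy the integral Carathéodory property. -/
/-- The `10 × 6` matrix of Bruns et al. -/
def M : Matrix (Fin 10) (Fin 6) ℤ :=
  !![0, 1, 0, 0, 0, 0;
     0, 0, 1, 0, 0, 0;
     0, 0, 0, 1, 0, 0;
     0, 0, 0, 0, 1, 0;
     0, 0, 0, 0, 0, 1;
     1, 0, 2, 1, 1, 2;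
     1, 2, 0, 2, 1, 1;
     1, 1, 2, 0, 2, 1;
     1, 1, 1, 2, 0, 2;
     1, 2, 1, 1, 2, 0]

/-- The test vector `x = (9,13,13,13,13,13)`. -/
def xvec : Fin 6 → ℤ := ![9, 13, 13, 13, 13, 13]

/-!
Write `y = (c₅, …, c₉)` for the coefficients of the last five rows. The first coordinate
gives `y₀ + ⋯ + y₄ = 9`. In coordinates `1, …, 5` the row of `y_k` is `1 + e_{k-1} + e_{k+1} - e_k`
(indices mod 5), so the remaining coordinates force `c_k = 4 + y_k - y_{k-1} - y_{k+1}`.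
A representation of `x` is thus the same as a composition `y` of `9` into five parts whose
cyclic defects are nonnegative. There are only 715 compositions of `9` into five parts, and
checking them all shows that whenever the defects are nonnegative, `y` and its defects together
have at least seven nonzero entries.
-/

open Finset

def cyclicDefect (y : Fin 5 → ℕ) (k : Fin 5) : ℤ := 4 + y k - y (k - 1) - y (k + 1)

lemma card_filter_fin_add {m n : ℕ} (p : Fin (m + n) → Prop) [DecidablePred p] :
    #{i | p i} = #{i | p (Fin.castAdd n i)} + #{i | p (Fin.natAdd m i)} := by
  simp only [card_filter, Fin.sum_univ_add]

lemma sum_eq_nine_and_eq_cyclicDefect {c : Fin (5 + 5) → ℕ}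
    (h : ∀ j, ∑ i, (c i : ℤ) * M i j = xvec j) :
    ∑ k, c (Fin.natAdd 5 k) = 9 ∧
      ∀ k, (c (Fin.castAdd 5 k) : ℤ) = cyclicDefect (fun k => c (Fin.natAdd 5 k)) k := by
  have h0 := h 0; have h1 := h 1; have h2 := h 2; have h3 := h 3; have h4 := h 4; have h5 := h 5
  simp only [M, xvec, Fin.sum_univ_succ, Fin.sum_univ_zero, Matrix.of_apply, Matrix.cons_val,
    Matrix.cons_val_zero, Matrix.cons_val_succ, Matrix.cons_val_one, Fin.succ_zero_eq_one,
    Fin.reduceSucc, mul_zero, mul_one, zero_add, add_zero] at h0 h1 h2 h3 h4 h5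
  refine ⟨?_, fun k => ?_⟩
  · have : ∑ k, c (Fin.natAdd 5 k) = c 5 + c 6 + c 7 + c 8 + c 9 := Fin.sum_univ_five _
    omega
  · fin_cases k <;> simp [cyclicDefect, Fin.natAdd, Fin.castAdd] <;> linarith

set_option maxRecDepth 100000 in
theorem seven_le_card_ne_zero_add_card_cyclicDefect_ne_zero :
    ∀ y ∈ Nat.antidiagonalTuple 5 9, (∀ k, 0 ≤ cyclicDefect y k) →
      7 ≤ #{k | y k ≠ 0} + #{k | cyclicDefect y k ≠ 0} := by
  decide

/-- `x = (9,13,13,13,13,13)` cannot be written as a non-negative integral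
combination of six of the ten rows of `M`; hence the cone generated by the rows
of `M` fails the integral Carathéodory property. -/
theorem no_integral_caratheodory :
    ¬ ∃ c : Fin 10 → ℕ,
        (Finset.univ.filter fun i => c i ≠ 0).card ≤ 6 ∧
        ∀ j, ∑ i, (c i : ℤ) * M i j = xvec j := by
  rintro ⟨c, hcard, hc⟩
  obtain ⟨hsum, hdefect⟩ := sum_eq_nine_and_eq_cyclicDefect (c := c) hc
  have hseven := seven_le_card_ne_zero_add_card_cyclicDefect_ne_zero _
    (Nat.mem_antidiagonalTuple.2 hsum) fun k => hdefect k ▸ Int.natCast_nonneg _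
  simp only [← hdefect, Nat.cast_ne_zero] at hseven
  have hsplit : #{i | c i ≠ 0} = _ := card_filter_fin_add (m := 5) (n := 5) (c · ≠ 0)
  omega
end

section
/- The cone C generated by the rows of the matrix M above is pointed: it contains no line, equivalently C ∩ (-C) = {0}. -/
/-! A positive functional on the generators forces the cone to be pointed: here every row of `M` has
positive coordinate sum, so pairing `λ M = v` and `μ M = -v` with the all-ones vector gives
`(λ + μ) · (M 𝟙) = 0` with `M 𝟙 > 0` entrywise, whence `λ = μ = 0`. -/

open Matrix

theorem eq_zero_of_nonneg_of_dotProduct_pos_eq_zero {R ι : Type*} [Semiring R] [PartialOrder R]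
    [IsOrderedRing R] [NoZeroDivisors R] [Fintype ι] {x y : ι → R} (hx : 0 ≤ x) (hy : ∀ i, 0 < y i)
    (hxy : x ⬝ᵥ y = 0) : x = 0 := by
  have hterms := (Finset.sum_eq_zero_iff_of_nonneg fun i _ => mul_nonneg (hx i) (hy i).le).1 hxy
  funext i
  exact (mul_eq_zero.1 (hterms i (Finset.mem_univ i))).resolve_right (hy i).ne'

theorem vecMul_eq_zero_of_vecMul_eq_neg {R m n : Type*} [CommRing R] [PartialOrder R]
    [IsOrderedRing R] [NoZeroDivisors R] [Fintype m] [Fintype n] (A : Matrix m n R) (w : n → R)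
    (hw : ∀ i, 0 < (A *ᵥ w) i) {lam mu : m → R} (hlam : 0 ≤ lam) (hmu : 0 ≤ mu)
    (h : lam ᵥ* A = -(mu ᵥ* A)) : lam ᵥ* A = 0 := by
  have hsum : (lam + mu) ⬝ᵥ (A *ᵥ w) = 0 := by
    rw [dotProduct_mulVec, add_vecMul, h, neg_add_cancel, zero_dotProduct]
  have hzero := eq_zero_of_nonneg_of_dotProduct_pos_eq_zero (add_nonneg hlam hmu) hw hsum
  have : lam = 0 := le_antisymm (eq_neg_of_add_eq_zero_left hzero ▸ neg_nonpos.2 hmu) hlam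
  rw [this, zero_vecMul]

theorem M_mulVec_one_pos (i : Fin 10) : 0 < ((M.map ((↑) : ℤ → ℝ)) *ᵥ fun _ => 1) i := by
  fin_cases i <;> norm_num [mulVec, dotProduct, M, Fin.sum_univ_succ]

/-- The cone `C` generated by the rows of `M` is pointed: `C ∩ (-C) = {0}`. -/
theorem cone_pointed (v : Fin 6 → ℝ)
    (h₁ : ∃ lam : Fin 10 → ℝ, (∀ i, 0 ≤ lam i) ∧
      ∀ j, ∑ i, lam i * (M i j : ℝ) = v j)
    (h₂ : ∃ mu : Fin 10 → ℝ, (∀ i, 0 ≤ mu i) ∧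
      ∀ j, ∑ i, mu i * (M i j : ℝ) = -v j) :
    v = 0 := by
  obtain ⟨lam, hlam, hl⟩ := h₁
  obtain ⟨mu, hmu, hm⟩ := h₂
  have hlv : lam ᵥ* M.map ((↑) : ℤ → ℝ) = v := funext hl
  have hmv : mu ᵥ* M.map ((↑) : ℤ → ℝ) = -v := funext hm
  rw [← hlv]
  exact vecMul_eq_zero_of_vecMul_eq_neg _ _ M_mulVec_one_pos hlam hmu (by rw [hlv, hmv, neg_neg])
end
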